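/- arXiv:2208.11639 — 7 statements merged into one kernel-verified Lean document; each statement's English description precedes it below -/
import Mathlib

section
/- Let 𝒮 and 𝒜 be finite nonempty sets with |𝒮| = S and |𝒜| = A, and let λ > 0. For Q : 𝒮 × 𝒜 → ℝ define the softmax policy by softmax_λ(s,Q)_a := exp(λ Q(s,a)) / Σ_{a'∈𝒜} exp(λ Q(s,a')). Then for all Q, Q' : 𝒮 × 𝒜 → ℝ one has max_{a∈𝒜} Σ_{s∈𝒮} |softmax_λ(s,Q)_a − softmax_λ(s,Q')_a| ≤ λ · S · √A · max_{(s,a)∈𝒮×𝒜} |Q(s,a) − Q'(s,a)|. -/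
/-!
Fix a state `s` and write `p = softmax(x)`, `q = softmax(y)` with `x = λ Q(s,·)`, `y = λ Q'(s,·)`
and `‖x - y‖_∞ ≤ ε`. Dividing through by `exp (x a)` gives `p_a = 1 / (1 + σ)` with
`σ = Σ_{b ≠ a} exp (x b - x a)`, and likewise `q_a = 1 / (1 + τ)`, where `τ ≤ e^{2ε} σ`.
Hence `p_a - q_a ≤ 1/(1+σ) - 1/(1+e^{2ε}σ) ≤ tanh (ε/2) ≤ ε`, so every coordinate of the
softmax moves by at most `λ ‖Q - Q'‖_∞`. Summing over the `S` states gives the bound with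
constant `λ S`, which is at most `λ S √A`.
-/

open Finset Real

/-- The softmax policy: `softmax_λ(s,Q)_a = exp(λ Q(s,a)) / Σ_{a'} exp(λ Q(s,a'))`. -/
noncomputable def softmaxQ {S A : Type*} [Fintype A] (lam : ℝ) (Q : S × A → ℝ)
    (s : S) (a : A) : ℝ :=
  Real.exp (lam * Q (s, a)) / ∑ a' : A, Real.exp (lam * Q (s, a'))

lemma inv_one_add_sub_inv_one_add_sq_mul_le {s r : ℝ} (hs : 0 ≤ s) (hr : 1 ≤ r) :
    (1 + s)⁻¹ - (1 + r ^ 2 * s)⁻¹ ≤ (r - 1) / (r + 1) := by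
  rw [inv_sub_inv (by positivity) (by positivity), div_le_div_iff₀ (by positivity) (by positivity)]
  -- the difference of the two sides is `(r - 1) (1 - r s)² ≥ 0`
  nlinarith [mul_nonneg (sub_nonneg.mpr hr) (sq_nonneg (1 - r * s))]

lemma exp_sub_one_div_exp_add_one_le {ε : ℝ} (hε : 0 ≤ ε) :
    (exp ε - 1) / (exp ε + 1) ≤ ε := by
  have hinv : exp (-ε) * exp ε = 1 := by rw [← exp_add, neg_add_cancel, exp_zero]
  have hlin : 1 - ε ≤ exp (-ε) := by linarith [add_one_le_exp (-ε)]
  rw [div_le_iff₀ (by positivity)]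
  nlinarith [exp_pos ε]

section Softmax

variable {ι : Type*} [Fintype ι]

lemma exp_div_sum_exp_eq_inv [DecidableEq ι] (x : ι → ℝ) (a : ι) :
    exp (x a) / ∑ b, exp (x b) = (1 + ∑ b ∈ univ.erase a, exp (x b - x a))⁻¹ := by
  have hsum : ∑ b, exp (x b) = exp (x a) * (1 + ∑ b ∈ univ.erase a, exp (x b - x a)) := by
    rw [← add_sum_erase _ _ (mem_univ a), mul_add, mul_one, mul_sum]
    congr 1
    refine sum_congr rfl fun b _ => ?_
    rw [← exp_add, add_sub_cancel]
  rw [hsum, div_mul_cancel_left₀ (exp_ne_zero _)]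

lemma sum_erase_exp_sub_le [DecidableEq ι] {x y : ι → ℝ} {ε : ℝ} (h : ∀ b, |x b - y b| ≤ ε)
    (a : ι) : ∑ b ∈ univ.erase a, exp (y b - y a)
      ≤ exp ε ^ 2 * ∑ b ∈ univ.erase a, exp (x b - x a) := by
  rw [mul_sum]
  refine sum_le_sum fun b _ => ?_
  rw [← exp_nat_mul, ← exp_add, exp_le_exp]
  have hb := abs_le.mp (h b)
  have ha := abs_le.mp (h a)
  push_cast
  linarith

lemma exp_div_sum_exp_sub_le {x y : ι → ℝ} {ε : ℝ} (h : ∀ b, |x b - y b| ≤ ε) (a : ι) :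
    exp (x a) / ∑ b, exp (x b) - exp (y a) / ∑ b, exp (y b) ≤ ε := by
  classical
  have hε : 0 ≤ ε := (abs_nonneg _).trans (h a)
  have hσ : 0 ≤ ∑ b ∈ univ.erase a, exp (x b - x a) := sum_nonneg fun _ _ => (exp_pos _).le
  rw [exp_div_sum_exp_eq_inv x, exp_div_sum_exp_eq_inv y]
  calc _ ≤ (1 + ∑ b ∈ univ.erase a, exp (x b - x a))⁻¹
          - (1 + exp ε ^ 2 * ∑ b ∈ univ.erase a, exp (x b - x a))⁻¹ := by
        gcongr
        exact sum_erase_exp_sub_le h a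
    _ ≤ (exp ε - 1) / (exp ε + 1) :=
        inv_one_add_sub_inv_one_add_sq_mul_le hσ (one_le_exp hε)
    _ ≤ ε := exp_sub_one_div_exp_add_one_le hε

lemma abs_exp_div_sum_exp_sub_le {x y : ι → ℝ} {ε : ℝ} (h : ∀ b, |x b - y b| ≤ ε) (a : ι) :
    |exp (x a) / ∑ b, exp (x b) - exp (y a) / ∑ b, exp (y b)| ≤ ε := by
  refine abs_sub_le_iff.mpr ⟨exp_div_sum_exp_sub_le h a, exp_div_sum_exp_sub_le (fun b => ?_) a⟩
  rw [abs_sub_comm]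
  exact h b

end Softmax

lemma abs_softmaxQ_sub_le {S A : Type*} [Fintype A] {lam ε : ℝ} (hlam : 0 ≤ lam)
    {Q Q' : S × A → ℝ} (h : ∀ p, |Q p - Q' p| ≤ ε) (s : S) (a : A) :
    |softmaxQ lam Q s a - softmaxQ lam Q' s a| ≤ lam * ε := by
  refine abs_exp_div_sum_exp_sub_le (x := fun b => lam * Q (s, b))
    (y := fun b => lam * Q' (s, b)) (fun b => ?_) a
  rw [← mul_sub, abs_mul, abs_of_nonneg hlam]
  exact mul_le_mul_of_nonneg_left (h (s, b)) hlam

/-- the softmax policy is Lipschitz from the sup norm on `ℝ^{𝒮×𝒜}`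
to the TV-type norm `max_a Σ_s |·|`, with constant `λ S √A`. -/
theorem softmax_tv_lipschitz {S A : Type*} [Fintype S] [Fintype A] [Nonempty S] [Nonempty A]
    (lam : ℝ) (hlam : 0 < lam) (Q Q' : S × A → ℝ) :
    Finset.univ.sup' Finset.univ_nonempty
        (fun a : A => ∑ s : S, |softmaxQ lam Q s a - softmaxQ lam Q' s a|)
      ≤ lam * (Fintype.card S : ℝ) * Real.sqrt (Fintype.card A)
          * Finset.univ.sup' Finset.univ_nonempty (fun p : S × A => |Q p - Q' p|) := by
  set M := univ.sup' univ_nonempty (fun p : S × A => |Q p - Q' p|)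
  have hQ : ∀ p, |Q p - Q' p| ≤ M := fun p => le_sup' (fun p => |Q p - Q' p|) (mem_univ p)
  have hM : 0 ≤ M := (abs_nonneg _).trans (hQ (Classical.arbitrary _))
  have hA : 1 ≤ √(Fintype.card A : ℝ) := one_le_sqrt.mpr (by exact_mod_cast Fintype.card_pos)
  refine sup'_le _ _ fun a _ => ?_
  calc ∑ s, |softmaxQ lam Q s a - softmaxQ lam Q' s a|
      ≤ ∑ _s : S, lam * M := sum_le_sum fun s _ => abs_softmaxQ_sub_le hlam.le hQ s a
    _ = lam * Fintype.card S * 1 * M := by rw [sum_const, card_univ, nsmul_eq_mul]; ring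
    _ ≤ lam * Fintype.card S * √(Fintype.card A) * M := by gcongr
end

section
/- Let 𝒜 be a finite nonempty set with |𝒜| = A and let λ > 0. For q ∈ ℝ^𝒜 define softmax_λ(q)_a := exp(λ q_a) / Σ_{a'∈𝒜} exp(λ q_{a'}). Then for all q, q' ∈ ℝ^𝒜, (Σ_{a∈𝒜} (softmax_λ(q)_a − softmax_λ(q')_a)²)^{1/2} ≤ λ √A · max_{a∈𝒜} |q_a − q'_a|. -/
/-!
Put `σ = softmax_λ(q)`, `σ' = softmax_λ(q')` and `t = λ ‖q - q'‖_∞`. Cross-multiplying,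
`σ_a - σ'_a` is a normalised sum of differences `e^u - e^v` with `|u - v| ≤ 2t`, and
`tanh x ≤ x` gives `|e^u - e^v| ≤ (|u - v| / 2) (e^u + e^v)`; hence
`|σ_a - σ'_a| ≤ t (σ_a + σ'_a)`. As both vectors sum to one, summing this bound over `b ≠ a`
also gives `|σ_a - σ'_a| ≤ t (2 - σ_a - σ'_a)`. Multiplying the two bounds and using
`s (2 - s) ≤ 1` shows that every coordinate of `σ - σ'` is at most `t` in absolute value,
so its Euclidean norm is at most `√A t`.
-/

open Finset Real

/-- The softmax vector: `softmax_λ(q)_a = exp(λ q_a) / Σ_{a'} exp(λ q_{a'})`. -/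
noncomputable def softmaxV {A : Type*} [Fintype A] (lam : ℝ) (q : A → ℝ) (a : A) : ℝ :=
  Real.exp (lam * q a) / ∑ a' : A, Real.exp (lam * q a')

lemma two_mul_exp_sub_one_le {s : ℝ} (hs : 0 ≤ s) : 2 * (exp s - 1) ≤ s * (exp s + 1) := by
  let g : ℝ → ℝ := fun x => x * (exp x + 1) - 2 * (exp x - 1)
  have hg : ∀ x, HasDerivAt g (exp x * (x - 1 + exp (-x))) x := by
    intro x
    refine (((hasDerivAt_id x).mul ((hasDerivAt_exp x).add_const 1)).sub
      (((hasDerivAt_exp x).sub_const 1).const_mul 2)).congr_deriv ?_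
    rw [mul_add _ _ (exp (-x)), ← exp_add, add_neg_cancel, exp_zero, id]
    ring
  have hg' : ∀ x, 0 ≤ exp x * (x - 1 + exp (-x)) := fun x =>
    mul_nonneg (exp_pos x).le (by linarith [add_one_le_exp (-x)])
  have := monotone_of_hasDerivAt_nonneg hg hg' hs
  simp only [g, zero_mul, exp_zero, sub_self, mul_zero] at this
  linarith

lemma abs_exp_sub_exp_le (u v : ℝ) : |exp u - exp v| ≤ |u - v| / 2 * (exp u + exp v) := by
  wlog h : v ≤ u generalizing u v
  · rw [abs_sub_comm, abs_sub_comm u, add_comm]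
    exact this v u (le_of_not_ge h)
  have hd := mul_le_mul_of_nonneg_left (two_mul_exp_sub_one_le (sub_nonneg.2 h)) (exp_pos v).le
  have hu : exp u = exp v * exp (u - v) := by rw [← exp_add, add_sub_cancel]
  rw [abs_of_nonneg (sub_nonneg.2 (exp_le_exp.2 h)), abs_of_nonneg (sub_nonneg.2 h), hu]
  nlinarith

lemma sq_sub_le_sq_of_abs_sub_le {x y t : ℝ} (h₁ : |x - y| ≤ t * (x + y))
    (h₂ : |x - y| ≤ t * (2 - x - y)) : (x - y) ^ 2 ≤ t ^ 2 := by
  have := mul_le_mul h₁ h₂ (abs_nonneg _) ((abs_nonneg _).trans h₁)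
  rw [abs_mul_abs_self] at this
  nlinarith [sq_nonneg (t * (x + y - 1))]

section

variable {A : Type*} [Fintype A]

lemma abs_sub_le_mul_two_sub_of_sum_eq_one {p p' : A → ℝ} {t : ℝ} (hp : ∑ b, p b = 1)
    (hp' : ∑ b, p' b = 1) (h : ∀ b, |p b - p' b| ≤ t * (p b + p' b)) (a : A) :
    |p a - p' a| ≤ t * (2 - p a - p' a) := by
  classical
  have hsplit : p a - p' a = -∑ b ∈ univ.erase a, (p b - p' b) := by
    rw [sum_erase_eq_sub (mem_univ a), sum_sub_distrib, hp, hp']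
    ring
  rw [hsplit, abs_neg]
  calc |∑ b ∈ univ.erase a, (p b - p' b)|
      ≤ ∑ b ∈ univ.erase a, |p b - p' b| := abs_sum_le_sum_abs _ _
    _ ≤ ∑ b ∈ univ.erase a, t * (p b + p' b) := sum_le_sum fun b _ => h b
    _ = t * (2 - p a - p' a) := by
      rw [← mul_sum, sum_add_distrib, sum_erase_eq_sub (mem_univ a),
        sum_erase_eq_sub (mem_univ a), hp, hp']
      ring

lemma sqrt_sum_sq_le_sqrt_card_mul {f : A → ℝ} {c : ℝ} (hc : 0 ≤ c) (h : ∀ a, f a ^ 2 ≤ c ^ 2) :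
    √(∑ a, f a ^ 2) ≤ √(Fintype.card A) * c := by
  calc √(∑ a, f a ^ 2) ≤ √(Fintype.card A * c ^ 2) :=
        sqrt_le_sqrt ((sum_le_sum fun a _ => h a).trans_eq (by simp))
    _ = √(Fintype.card A) * c := by rw [sqrt_mul (Nat.cast_nonneg _), sqrt_sq hc]

lemma sum_softmaxV [Nonempty A] (lam : ℝ) (q : A → ℝ) : ∑ a, softmaxV lam q a = 1 := by
  simp only [softmaxV, ← sum_div]
  exact div_self (sum_pos (fun a _ => exp_pos _) univ_nonempty).ne'

lemma abs_softmaxV_sub_le {lam t : ℝ} {q q' : A → ℝ} (h : ∀ a, |lam * q a - lam * q' a| ≤ t)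
    (a : A) :
    |softmaxV lam q a - softmaxV lam q' a| ≤ t * (softmaxV lam q a + softmaxV lam q' a) := by
  set E := fun b => exp (lam * q b)
  set E' := fun b => exp (lam * q' b)
  have hS : 0 < ∑ b, E b := sum_pos (fun b _ => exp_pos _) ⟨a, mem_univ a⟩
  have hS' : 0 < ∑ b, E' b := sum_pos (fun b _ => exp_pos _) ⟨a, mem_univ a⟩
  have hnum : |E a * ∑ b, E' b - (∑ b, E b) * E' a|
      ≤ t * (E a * ∑ b, E' b + (∑ b, E b) * E' a) := by
    rw [mul_sum, sum_mul, ← sum_sub_distrib, ← sum_add_distrib, mul_sum]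
    refine (abs_sum_le_sum_abs _ _).trans (sum_le_sum fun b _ => ?_)
    simp only [E, E', ← exp_add]
    refine (abs_exp_sub_exp_le _ _).trans (mul_le_mul_of_nonneg_right ?_ (by positivity))
    rw [show lam * q a + lam * q' b - (lam * q b + lam * q' a)
      = (lam * q a - lam * q' a) - (lam * q b - lam * q' b) by ring]
    linarith [abs_sub (lam * q a - lam * q' a) (lam * q b - lam * q' b), h a, h b]
  simp only [softmaxV]
  rw [div_sub_div _ _ hS.ne' hS'.ne', div_add_div _ _ hS.ne' hS'.ne', abs_div,
    abs_of_pos (mul_pos hS hS'), ← mul_div_assoc, div_le_div_iff_of_pos_right (mul_pos hS hS')]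
  exact hnum

end

/-- the softmax map is Lipschitz from the sup norm to the Euclidean norm
with constant `λ √A`. -/
theorem softmax_l2_lipschitz {A : Type*} [Fintype A] [Nonempty A]
    (lam : ℝ) (hlam : 0 < lam) (q q' : A → ℝ) :
    Real.sqrt (∑ a : A, (softmaxV lam q a - softmaxV lam q' a) ^ 2)
      ≤ lam * Real.sqrt (Fintype.card A)
          * Finset.univ.sup' Finset.univ_nonempty (fun a : A => |q a - q' a|) := by
  set M := univ.sup' univ_nonempty fun a => |q a - q' a|
  have hM : 0 ≤ M := (abs_nonneg _).trans (le_sup' (fun a => |q a - q' a|) (mem_univ (Classical.arbitrary A)))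
  have hscaled : ∀ a, |lam * q a - lam * q' a| ≤ lam * M := fun a => by
    rw [← mul_sub, abs_mul, abs_of_pos hlam]
    exact mul_le_mul_of_nonneg_left (le_sup' (fun a => |q a - q' a|) (mem_univ a)) hlam.le
  have hcoord : ∀ a, (softmaxV lam q a - softmaxV lam q' a) ^ 2 ≤ (lam * M) ^ 2 := fun a =>
    sq_sub_le_sq_of_abs_sub_le (abs_softmaxV_sub_le hscaled a)
      (abs_sub_le_mul_two_sub_of_sum_eq_one (sum_softmaxV lam q) (sum_softmaxV lam q')
        (abs_softmaxV_sub_le hscaled) a)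
  calc _ ≤ √(Fintype.card A) * (lam * M) :=
        sqrt_sum_sq_le_sqrt_card_mul (mul_nonneg hlam.le hM) hcoord
    _ = _ := by ring
end

section
/- Let a > 0 and ν ∈ (0,1] be reals, and let 0 ≤ k ≤ t be integers such that a/(l+1)^ν ≤ 1 for every integer l with k+1 ≤ l ≤ t. Then ∏_{l=k+1}^{t} (1 − a/(l+1)^ν) ≤ ((k+2)/(t+2))^a. If moreover a ≥ ν, then the product is also at most ((k+2)/(t+2))^ν. -/
/-!
Each factor satisfies `1 - a / (l + 1) ^ ν ≤ 1 - a / (l + 1) ≤ exp (-a / (l + 1)) ≤ ((l + 1) / (l + 2)) ^ a`,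
the last step being `log (1 + 1 / x) ≤ 1 / x`. The product of the right-hand sides telescopes to
`((k + 2) / (t + 2)) ^ a`, and since the base is at most `1`, lowering the exponent from `a` to `ν`
only increases the bound.
-/

open Finset Real

theorem exp_neg_div_le_div_add_one_rpow {x a : ℝ} (hx : 0 < x) (ha : 0 ≤ a) :
    exp (-(a / x)) ≤ (x / (x + 1)) ^ a := by
  rw [rpow_def_of_pos (by positivity), exp_le_exp]
  have hlog := one_sub_inv_le_log_of_pos (x := x / (x + 1)) (by positivity)
  have hlhs : 1 - (x / (x + 1))⁻¹ = -(1 / x) := by field_simp; ring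
  rw [hlhs] at hlog
  calc -(a / x) = a * -(1 / x) := by ring
    _ ≤ a * log (x / (x + 1)) := mul_le_mul_of_nonneg_left hlog ha
    _ = log (x / (x + 1)) * a := mul_comm _ _

theorem one_sub_div_rpow_le_div_add_one_rpow {x a ν : ℝ} (hx : 1 ≤ x) (ha : 0 ≤ a)
    (hν : ν ≤ 1) : 1 - a / x ^ ν ≤ (x / (x + 1)) ^ a := by
  have hx₀ : 0 < x := by linarith
  calc 1 - a / x ^ ν ≤ 1 - a / x := by gcongr; exact rpow_le_self_of_one_le hx hν
    _ ≤ exp (-(a / x)) := by linarith [add_one_le_exp (-(a / x))]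
    _ ≤ (x / (x + 1)) ^ a := exp_neg_div_le_div_add_one_rpow hx₀ ha

theorem prod_Icc_natCast_add_one_div_add_two {k t : ℕ} (hkt : k ≤ t) :
    ∏ l ∈ Icc (k + 1) t, ((l : ℝ) + 1) / ((l : ℝ) + 2) = ((k : ℝ) + 2) / ((t : ℝ) + 2) := by
  induction t, hkt using Nat.le_induction with
  | base => simp [div_self (by positivity : (k : ℝ) + 2 ≠ 0)]
  | succ t hkt ih =>
    rw [prod_Icc_succ_top (by omega), ih]
    push_cast
    field_simp
    ring

theorem prod_one_sub_step_le_rpow_general (a ν : ℝ) (ha : 0 < a) (hν1 : ν ≤ 1)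
    (k t : ℕ) (hkt : k ≤ t)
    (hsmall : ∀ l : ℕ, k + 1 ≤ l → l ≤ t → a / ((l : ℝ) + 1) ^ ν ≤ 1) :
    (∏ l ∈ Finset.Icc (k + 1) t, (1 - a / ((l : ℝ) + 1) ^ ν))
        ≤ (((k : ℝ) + 2) / ((t : ℝ) + 2)) ^ a
      ∧ (ν ≤ a →
        (∏ l ∈ Finset.Icc (k + 1) t, (1 - a / ((l : ℝ) + 1) ^ ν))
          ≤ (((k : ℝ) + 2) / ((t : ℝ) + 2)) ^ ν) := by
  have hbound : (∏ l ∈ Icc (k + 1) t, (1 - a / ((l : ℝ) + 1) ^ ν))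
      ≤ (((k : ℝ) + 2) / ((t : ℝ) + 2)) ^ a := by
    calc (∏ l ∈ Icc (k + 1) t, (1 - a / ((l : ℝ) + 1) ^ ν))
        ≤ ∏ l ∈ Icc (k + 1) t, (((l : ℝ) + 1) / ((l : ℝ) + 2)) ^ a := by
          refine prod_le_prod (fun l hl => ?_) (fun l _ => ?_)
          · obtain ⟨hkl, hlt⟩ := mem_Icc.mp hl
            linarith [hsmall l hkl hlt]
          · have := one_sub_div_rpow_le_div_add_one_rpow (x := (l : ℝ) + 1)
              (by linarith [l.cast_nonneg (α := ℝ)]) ha.le hν1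
            rwa [add_assoc, one_add_one_eq_two] at this
      _ = (((k : ℝ) + 2) / ((t : ℝ) + 2)) ^ a := by
          rw [finsetProd_rpow _ _ (fun l _ => by positivity),
            prod_Icc_natCast_add_one_div_add_two hkt]
  refine ⟨hbound, fun hνa => hbound.trans (rpow_le_rpow_of_exponent_ge (by positivity) ?_ hνa)⟩
  exact div_le_one_of_le₀ (by gcongr) (by positivity)

/-- for `a > 0`, `ν ∈ (0,1]` and integers `k ≤ t` with `a/(l+1)^ν ≤ 1`
for `k+1 ≤ l ≤ t`, we have `∏_{l=k+1}^{t} (1 − a/(l+1)^ν) ≤ ((k+2)/(t+2))^a`, and if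
moreover `a ≥ ν` the product is also at most `((k+2)/(t+2))^ν`. -/
theorem prod_one_sub_step_le_rpow (a ν : ℝ) (ha : 0 < a) (hν : 0 < ν) (hν1 : ν ≤ 1)
    (k t : ℕ) (hkt : k ≤ t)
    (hsmall : ∀ l : ℕ, k + 1 ≤ l → l ≤ t → a / ((l : ℝ) + 1) ^ ν ≤ 1) :
    (∏ l ∈ Finset.Icc (k + 1) t, (1 - a / ((l : ℝ) + 1) ^ ν))
        ≤ (((k : ℝ) + 2) / ((t : ℝ) + 2)) ^ a
      ∧ (ν ≤ a →
        (∏ l ∈ Finset.Icc (k + 1) t, (1 - a / ((l : ℝ) + 1) ^ ν))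
          ≤ (((k : ℝ) + 2) / ((t : ℝ) + 2)) ^ ν) :=
  prod_one_sub_step_le_rpow_general a ν ha hν1 k t hkt hsmall
end

section
/- Assume in addition c_β σ − 2ν + 1 > 0, and let τ ≥ 1 be an integer with τ ≤ t. Then Σ_{k=τ}^{t} β_{k,t} · (Σ_{l=k−τ}^{k−1} β_l) ≤ (2^{c_β σ} c_β² τ (τ+1)^ν / (c_β σ − 2ν + 1)) · (t+2)^{1−2ν}. -/
open Finset Real

/-!
Since `1 - β_l σ ≤ exp (-c_β σ / (l + 1)) ≤ ((l + 1) / (l + 2)) ^ (c_β σ)` (this is where `ν ≤ 1`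
enters), the product defining `β_{k,t}` telescopes to `β_{k,t} ≤ β_k ((k + 2) / (t + 2)) ^ (c_β σ)`.
Every `l` in the window satisfies `k + 1 ≤ (τ + 1)(l + 1)`, so the window sum is at most
`τ (τ + 1) ^ ν β_k`. The `k`-th term is therefore `O((k + 1) ^ (c_β σ - 2ν) / (t + 2) ^ (c_β σ))`,
and the power sum `∑_{k ≤ t} (k + 1) ^ p ≤ (t + 2) ^ (p + 1) / (p + 1)` gives the rate.
-/

/-- The step size `β_t = c_β/(t+1)^ν`. -/
noncomputable def betaStep (cβ ν : ℝ) (t : ℕ) : ℝ := cβ / ((t : ℝ) + 1) ^ ν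

/-- `β_{k,t} = β_k ∏_{l=k+1}^{t} (1 − β_l σ)`. -/
noncomputable def betaKT (cβ σ ν : ℝ) (k t : ℕ) : ℝ :=
  betaStep cβ ν k * ∏ l ∈ Finset.Icc (k + 1) t, (1 - betaStep cβ ν l * σ)

lemma one_sub_le_rpow_div_add_one {a b x : ℝ} (ha : 0 ≤ a) (hx : 0 < x) (hb : a / x ≤ b) :
    1 - b ≤ (x / (x + 1)) ^ a := by
  have hlog : -(1 / x) ≤ log (x / (x + 1)) := by
    have h := one_sub_inv_le_log_of_pos (show 0 < x / (x + 1) by positivity)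
    rwa [inv_div, one_sub_div hx.ne', show (x - (x + 1)) / x = -(1 / x) by ring] at h
  calc 1 - b ≤ exp (-b) := by linarith [add_one_le_exp (-b)]
    _ ≤ exp (a * log (x / (x + 1))) := by
        gcongr
        nlinarith [mul_le_mul_of_nonneg_left hlog ha, mul_one_div a x]
    _ = (x / (x + 1)) ^ a := by rw [rpow_def_of_pos (by positivity), mul_comm]

lemma prod_Icc_succ_div_succ_succ {k t : ℕ} (h : k ≤ t) :
    ∏ l ∈ Icc (k + 1) t, (((l : ℝ) + 1) / ((l : ℝ) + 2)) = ((k : ℝ) + 2) / ((t : ℝ) + 2) := by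
  induction t, h using Nat.le_induction with
  | base => simp [div_self (by positivity : (k : ℝ) + 2 ≠ 0)]
  | succ n hkn ih =>
    rw [prod_Icc_succ_top (by omega), ih]
    push_cast
    field_simp
    ring

lemma mul_rpow_sub_one_le_add_one_rpow_sub_rpow {q x : ℝ} (hq : 1 ≤ q) (hx : 0 < x) :
    q * x ^ (q - 1) ≤ (x + 1) ^ q - x ^ q := by
  have h := one_add_mul_self_le_rpow_one_add (s := 1 / x)
    (by linarith [one_div_pos.2 hx]) hq
  rw [one_add_div hx.ne', div_rpow (by positivity) hx.le,
    le_div_iff₀ (by positivity)] at h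
  rw [rpow_sub_one hx.ne']
  field_simp at h ⊢
  linarith

lemma mul_rpow_sub_one_le_rpow_sub_sub_one_rpow {q x : ℝ} (hq0 : 0 ≤ q) (hq1 : q ≤ 1)
    (hx : 1 ≤ x) :
    q * x ^ (q - 1) ≤ x ^ q - (x - 1) ^ q := by
  have hx0 : 0 < x := by linarith
  have h := rpow_one_add_le_one_add_mul_self (s := -(1 / x))
    (by rw [neg_le_neg_iff, div_le_one hx0]; exact hx) hq0 hq1
  rw [← sub_eq_add_neg, one_sub_div hx0.ne', div_rpow (by linarith) hx0.le,
    div_le_iff₀ (by positivity)] at h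
  rw [rpow_sub_one hx0.ne']
  field_simp at h ⊢
  linarith

/-- Both cases telescope: for `p ≥ 0` against `(k + 2) ^ (p + 1) - (k + 1) ^ (p + 1)`, for
`p < 0` against `(k + 1) ^ (p + 1) - k ^ (p + 1)`. -/
lemma sum_range_rpow_le {p : ℝ} (hp : -1 < p) (n : ℕ) :
    ∑ k ∈ range n, ((k : ℝ) + 1) ^ p ≤ ((n : ℝ) + 1) ^ (p + 1) / (p + 1) := by
  have hq : 0 < p + 1 := by linarith
  rw [le_div_iff₀ hq, sum_mul]
  rcases le_or_gt 0 p with hp0 | hp0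
  · calc ∑ k ∈ range n, ((k : ℝ) + 1) ^ p * (p + 1)
        ≤ ∑ k ∈ range n, ((((k + 1 : ℕ) : ℝ) + 1) ^ (p + 1) - ((k : ℝ) + 1) ^ (p + 1)) := by
          refine sum_le_sum fun k _ => ?_
          have h := mul_rpow_sub_one_le_add_one_rpow_sub_rpow (q := p + 1) (x := (k : ℝ) + 1)
            (by linarith) (by positivity)
          rw [add_sub_cancel_right] at h
          push_cast
          linarith
      _ ≤ ((n : ℝ) + 1) ^ (p + 1) := by
          rw [sum_range_sub (fun k : ℕ => ((k : ℝ) + 1) ^ (p + 1))]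
          simp
  · calc ∑ k ∈ range n, ((k : ℝ) + 1) ^ p * (p + 1)
        ≤ ∑ k ∈ range n, ((((k + 1 : ℕ) : ℝ)) ^ (p + 1) - (k : ℝ) ^ (p + 1)) := by
          refine sum_le_sum fun k _ => ?_
          have h := mul_rpow_sub_one_le_rpow_sub_sub_one_rpow (q := p + 1) (x := (k : ℝ) + 1)
            hq.le (by linarith) (by linarith [k.cast_nonneg (α := ℝ)])
          rw [add_sub_cancel_right, add_sub_cancel_right] at h
          push_cast
          linarith
      _ ≤ ((n : ℝ) + 1) ^ (p + 1) := by
          rw [sum_range_sub (fun k : ℕ => (k : ℝ) ^ (p + 1)), Nat.cast_zero,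
            zero_rpow hq.ne', sub_zero]
          exact rpow_le_rpow (by positivity) (by linarith) hq.le

lemma betaStep_nonneg {cβ : ℝ} (hcβ : 0 ≤ cβ) (ν : ℝ) (k : ℕ) : 0 ≤ betaStep cβ ν k :=
  div_nonneg hcβ (rpow_nonneg (by positivity) ν)

lemma betaKT_le {cβ σ ν : ℝ} (hcβ : 0 ≤ cβ) (hσ : 0 ≤ σ) (hν1 : ν ≤ 1) {k t : ℕ} (hkt : k ≤ t)
    (hsmall : ∀ l, l ≤ t → betaStep cβ ν l * σ ≤ 1) :
    betaKT cβ σ ν k t ≤ betaStep cβ ν k * (((k : ℝ) + 2) / ((t : ℝ) + 2)) ^ (cβ * σ) := by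
  have hfactor : ∀ l ∈ Icc (k + 1) t,
      1 - betaStep cβ ν l * σ ≤ (((l : ℝ) + 1) / ((l : ℝ) + 2)) ^ (cβ * σ) := by
    intro l _
    have hl : (1 : ℝ) ≤ (l : ℝ) + 1 := by linarith [l.cast_nonneg (α := ℝ)]
    have hpow : ((l : ℝ) + 1) ^ ν ≤ (l : ℝ) + 1 := by
      simpa using rpow_le_rpow_of_exponent_le hl hν1
    rw [show (l : ℝ) + 2 = (l : ℝ) + 1 + 1 by ring]
    refine one_sub_le_rpow_div_add_one (mul_nonneg hcβ hσ) (by positivity) ?_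
    rw [betaStep, div_mul_eq_mul_div]
    gcongr
  unfold betaKT
  gcongr
  · exact betaStep_nonneg hcβ ν k
  calc ∏ l ∈ Icc (k + 1) t, (1 - betaStep cβ ν l * σ)
      ≤ ∏ l ∈ Icc (k + 1) t, (((l : ℝ) + 1) / ((l : ℝ) + 2)) ^ (cβ * σ) :=
        prod_le_prod (fun l hl => sub_nonneg.2 (hsmall l (mem_Icc.1 hl).2)) hfactor
    _ = (((k : ℝ) + 2) / ((t : ℝ) + 2)) ^ (cβ * σ) := by
        rw [finsetProd_rpow _ _ (fun l _ => by positivity), prod_Icc_succ_div_succ_succ hkt]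

lemma betaStep_le_of_le_add {cβ ν : ℝ} (hcβ : 0 ≤ cβ) (hν : 0 ≤ ν) {k l τ : ℕ}
    (h : k ≤ l + τ) : betaStep cβ ν l ≤ ((τ : ℝ) + 1) ^ ν * betaStep cβ ν k := by
  have hkl : (k : ℝ) + 1 ≤ ((τ : ℝ) + 1) * ((l : ℝ) + 1) := by
    have : (k : ℝ) ≤ l + τ := by exact_mod_cast h
    nlinarith [l.cast_nonneg (α := ℝ), τ.cast_nonneg (α := ℝ)]
  have hpow : ((k : ℝ) + 1) ^ ν ≤ ((τ : ℝ) + 1) ^ ν * ((l : ℝ) + 1) ^ ν := by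
    rw [← mul_rpow (by positivity) (by positivity)]
    exact rpow_le_rpow (by positivity) hkl hν
  rw [betaStep, betaStep, mul_div_assoc', div_le_div_iff₀ (by positivity) (by positivity)]
  nlinarith

lemma sum_window_betaStep_le {cβ ν : ℝ} (hcβ : 0 ≤ cβ) (hν : 0 ≤ ν) {k τ : ℕ} (hτ : 1 ≤ τ)
    (hτk : τ ≤ k) :
    ∑ l ∈ Icc (k - τ) (k - 1), betaStep cβ ν l ≤ τ * ((τ : ℝ) + 1) ^ ν * betaStep cβ ν k := by
  have hcard : #(Icc (k - τ) (k - 1)) = τ := by rw [Nat.card_Icc]; omega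
  calc ∑ l ∈ Icc (k - τ) (k - 1), betaStep cβ ν l
      ≤ #(Icc (k - τ) (k - 1)) • (((τ : ℝ) + 1) ^ ν * betaStep cβ ν k) :=
        sum_le_card_nsmul _ _ _ fun l hl =>
          betaStep_le_of_le_add hcβ hν (by have := (mem_Icc.1 hl).1; omega)
    _ = τ * ((τ : ℝ) + 1) ^ ν * betaStep cβ ν k := by rw [hcard, nsmul_eq_mul, mul_assoc]

lemma betaStep_sq_mul_rpow_le (cβ ν : ℝ) {a : ℝ} (ha : 0 ≤ a) (k t : ℕ) :
    betaStep cβ ν k ^ 2 * (((k : ℝ) + 2) / ((t : ℝ) + 2)) ^ a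
      ≤ 2 ^ a * cβ ^ 2 * ((k : ℝ) + 1) ^ (a - 2 * ν) / ((t : ℝ) + 2) ^ a := by
  have hk : (0 : ℝ) < k + 1 := by positivity
  have h2 : ((k : ℝ) + 2) ^ a ≤ 2 ^ a * ((k : ℝ) + 1) ^ a := by
    rw [← mul_rpow (by norm_num) hk.le]
    exact rpow_le_rpow (by positivity) (by linarith) ha
  rw [div_rpow (by positivity) (by positivity), show a - 2 * ν = a - ν - ν by ring,
    rpow_sub hk, rpow_sub hk, betaStep]
  calc (cβ / ((k : ℝ) + 1) ^ ν) ^ 2 * (((k : ℝ) + 2) ^ a / ((t : ℝ) + 2) ^ a)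
      = cβ ^ 2 / (((k : ℝ) + 1) ^ ν) ^ 2 / ((t : ℝ) + 2) ^ a * ((k : ℝ) + 2) ^ a := by ring
    _ ≤ cβ ^ 2 / (((k : ℝ) + 1) ^ ν) ^ 2 / ((t : ℝ) + 2) ^ a * (2 ^ a * ((k : ℝ) + 1) ^ a) := by
        gcongr
    _ = _ := by ring

lemma betaKT_mul_sum_window_le {cβ σ ν : ℝ} (hcβ : 0 ≤ cβ) (hσ : 0 ≤ σ) (hν : 0 ≤ ν)
    (hν1 : ν ≤ 1) {k t τ : ℕ} (hτ : 1 ≤ τ) (hτk : τ ≤ k) (hkt : k ≤ t)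
    (hsmall : ∀ l, l ≤ t → betaStep cβ ν l * σ ≤ 1) :
    betaKT cβ σ ν k t * ∑ l ∈ Icc (k - τ) (k - 1), betaStep cβ ν l
      ≤ τ * ((τ : ℝ) + 1) ^ ν * (2 ^ (cβ * σ) * cβ ^ 2) / ((t : ℝ) + 2) ^ (cβ * σ)
          * ((k : ℝ) + 1) ^ (cβ * σ - 2 * ν) := by
  calc _ ≤ betaStep cβ ν k * (((k : ℝ) + 2) / ((t : ℝ) + 2)) ^ (cβ * σ)
        * (τ * ((τ : ℝ) + 1) ^ ν * betaStep cβ ν k) :=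
        mul_le_mul (betaKT_le hcβ hσ hν1 hkt hsmall) (sum_window_betaStep_le hcβ hν hτ hτk)
          (sum_nonneg fun l _ => betaStep_nonneg hcβ ν l)
          (mul_nonneg (betaStep_nonneg hcβ ν k) (by positivity))
    _ = τ * ((τ : ℝ) + 1) ^ ν
        * (betaStep cβ ν k ^ 2 * (((k : ℝ) + 2) / ((t : ℝ) + 2)) ^ (cβ * σ)) := by ring
    _ ≤ τ * ((τ : ℝ) + 1) ^ ν * (2 ^ (cβ * σ) * cβ ^ 2
        * ((k : ℝ) + 1) ^ (cβ * σ - 2 * ν) / ((t : ℝ) + 2) ^ (cβ * σ)) := by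
        gcongr
        exact betaStep_sq_mul_rpow_le cβ ν (mul_nonneg hcβ hσ) k t
    _ = _ := by ring

theorem sum_betaKT_mul_sum_beta_le_general (cβ σ ν : ℝ) (hcβ : 0 < cβ) (hσ : 0 < σ)
    (hν : 0 < ν) (hν1 : ν ≤ 1) (t : ℕ)
    (hsmall : ∀ l : ℕ, l ≤ t → betaStep cβ ν l * σ ≤ 1)
    (hpos : 0 < cβ * σ - 2 * ν + 1)
    (τ : ℕ) (hτ : 1 ≤ τ) :
    ∑ k ∈ Finset.Icc τ t, betaKT cβ σ ν k t * ∑ l ∈ Finset.Icc (k - τ) (k - 1), betaStep cβ ν l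
      ≤ (2 : ℝ) ^ (cβ * σ) * cβ ^ 2 * (τ : ℝ) * ((τ : ℝ) + 1) ^ ν / (cβ * σ - 2 * ν + 1)
          * ((t : ℝ) + 2) ^ (1 - 2 * ν) := by
  set a := cβ * σ
  set C := τ * ((τ : ℝ) + 1) ^ ν * (2 ^ a * cβ ^ 2) / ((t : ℝ) + 2) ^ a
  have ht : (0 : ℝ) < t + 2 := by positivity
  calc _ ≤ ∑ k ∈ Icc τ t, C * ((k : ℝ) + 1) ^ (a - 2 * ν) :=
        sum_le_sum fun k hk => betaKT_mul_sum_window_le hcβ.le hσ.le hν.le hν1 hτ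
          (mem_Icc.1 hk).1 (mem_Icc.1 hk).2 hsmall
    _ ≤ ∑ k ∈ range (t + 1), C * ((k : ℝ) + 1) ^ (a - 2 * ν) :=
        sum_le_sum_of_subset_of_nonneg (fun k hk => by simp only [mem_Icc, mem_range] at *; omega)
          fun _ _ _ => by positivity
    _ ≤ C * (((t + 1 : ℕ) : ℝ) + 1) ^ (a - 2 * ν + 1) / (a - 2 * ν + 1) := by
        rw [← mul_sum, mul_div_assoc]
        gcongr
        exact sum_range_rpow_le (by linarith) (t + 1)
    _ = _ := by
        rw [Nat.cast_add_one, add_assoc, one_add_one_eq_two,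
          show a - 2 * ν + 1 = a + (1 - 2 * ν) by ring, rpow_add ht]
        simp only [C]
        field_simp

/-- if `c_β σ − 2ν + 1 > 0` and `1 ≤ τ ≤ t`, then
`Σ_{k=τ}^{t} β_{k,t} (Σ_{l=k−τ}^{k−1} β_l)
  ≤ (2^{c_β σ} c_β² τ (τ+1)^ν / (c_β σ − 2ν + 1)) (t+2)^{1−2ν}`. -/
theorem sum_betaKT_mul_sum_beta_le (cβ σ ν : ℝ) (hcβ : 0 < cβ) (hσ : 0 < σ) (hσ1 : σ ≤ 1)
    (hν : 0 < ν) (hν1 : ν ≤ 1) (t : ℕ)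
    (hsmall : ∀ l : ℕ, l ≤ t → betaStep cβ ν l * σ ≤ 1)
    (hpos : 0 < cβ * σ - 2 * ν + 1)
    (τ : ℕ) (hτ : 1 ≤ τ) (hτt : τ ≤ t) :
    ∑ k ∈ Finset.Icc τ t, betaKT cβ σ ν k t * ∑ l ∈ Finset.Icc (k - τ) (k - 1), betaStep cβ ν l
      ≤ (2 : ℝ) ^ (cβ * σ) * cβ ^ 2 * (τ : ℝ) * ((τ : ℝ) + 1) ^ ν / (cβ * σ - 2 * ν + 1)
          * ((t : ℝ) + 2) ^ (1 - 2 * ν) :=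
  sum_betaKT_mul_sum_beta_le_general cβ σ ν hcβ hσ hν hν1 t hsmall hpos τ hτ
end

section
/- Let in addition c_μ > 0 and ζ > 1 be reals, set c_{μ,l} := c_μ/(l+1)^ζ for integers l ≥ 0, and let 1 ≤ τ ≤ t be integers. Then β̃_{τ−1,t} · (Σ_{l=τ}^{t} c_{μ,l}) + Σ_{k=τ}^{t} β_{k,t} · (Σ_{l=k}^{t} c_{μ,l}) ≤ c_μ / (σ (ζ−1) τ^{ζ−1}). -/
/-!
With `P k = ∏_{j=k}^{t} (1 - β_j σ)` one has `σ β_{k,t} = P (k+1) - P k`, so after exchanging the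
order of summation `σ` times the left-hand side telescopes to
`∑_{l=τ}^{t} (P (l+1) - (1 - σ) P τ) c_{μ,l}`, and each coefficient lies in `[0, 1]`.
The tail `∑_{l ≥ τ} (l+1)^{-ζ}` is bounded by telescoping as well: Bernoulli's inequality
`(1 + 1/x)^ζ ≥ 1 + ζ/x` gives `(x+1)^{-ζ} ≤ (x^{1-ζ} - (x+1)^{1-ζ}) / (ζ - 1)`.
-/

open Finset Real

/-- `β̃_{k,t} = ∏_{l=k+1}^{t} (1 − β_l σ)`; in particular
`β̃_{τ−1,t} = ∏_{l=τ}^{t} (1 − β_l σ)`. -/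
noncomputable def betaTildeKT (cβ σ ν : ℝ) (k t : ℕ) : ℝ :=
  ∏ l ∈ Finset.Icc (k + 1) t, (1 - betaStep cβ ν l * σ)

/-- The mean-field step size `c_{μ,l} = c_μ/(l+1)^ζ`. -/
noncomputable def muStep (cμ ζ : ℝ) (l : ℕ) : ℝ := cμ / ((l : ℝ) + 1) ^ ζ

theorem rpow_mul_add_le_add_one_rpow_add_one {x q : ℝ} (hx : 0 < x) (hq : 0 ≤ q) :
    x ^ q * (x + q + 1) ≤ (x + 1) ^ (q + 1) := by
  have hbern := one_add_mul_self_le_rpow_one_add (s := x⁻¹) (by linarith [inv_pos.2 hx])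
    (p := q + 1) (by linarith)
  rw [show 1 + x⁻¹ = (x + 1) / x by field_simp, div_rpow (by linarith) hx.le,
    le_div_iff₀ (by positivity), rpow_add_one hx.ne'] at hbern
  calc x ^ q * (x + q + 1) = (1 + (q + 1) * x⁻¹) * (x ^ q * x) := by field_simp; ring
    _ ≤ (x + 1) ^ (q + 1) := hbern

theorem one_div_add_one_rpow_add_one_le_sub {x q : ℝ} (hx : 0 < x) (hq : 0 < q) :
    1 / (x + 1) ^ (q + 1) ≤ 1 / (q * x ^ q) - 1 / (q * (x + 1) ^ q) := by
  have hmain := rpow_mul_add_le_add_one_rpow_add_one hx hq.le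
  rw [rpow_add_one (by linarith)] at hmain ⊢
  have hxq : 0 < x ^ q := by positivity
  have hx1q : 0 < (x + 1) ^ q := by positivity
  rw [div_sub_div _ _ (by positivity) (by positivity), div_le_div_iff₀ (by positivity) (by positivity)]
  nlinarith [mul_le_mul_of_nonneg_left hmain (mul_pos hq hx1q).le]

theorem sum_Icc_one_div_add_one_rpow_le {ζ : ℝ} (hζ : 1 < ζ) {τ : ℕ} (hτ : 1 ≤ τ) (t : ℕ) :
    ∑ l ∈ Icc τ t, 1 / ((l : ℝ) + 1) ^ ζ ≤ 1 / ((ζ - 1) * (τ : ℝ) ^ (ζ - 1)) := by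
  set g : ℕ → ℝ := fun l => 1 / ((ζ - 1) * (l : ℝ) ^ (ζ - 1))
  have hg : 0 ≤ g (t + 1) := by positivity
  rcases lt_or_ge t τ with hlt | hle
  · rw [Icc_eq_empty (by omega), sum_empty]
    positivity
  calc ∑ l ∈ Icc τ t, 1 / ((l : ℝ) + 1) ^ ζ ≤ ∑ l ∈ Icc τ t, -(g (l + 1) - g l) := by
        refine sum_le_sum fun l hl => ?_
        have hl : (0 : ℝ) < l := Nat.cast_pos.2 (by have := (mem_Icc.1 hl).1; omega)
        simpa [g, sub_add_cancel] using
          one_div_add_one_rpow_add_one_le_sub hl (sub_pos.2 hζ)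
    _ = g τ - g (t + 1) := by rw [sum_neg_distrib, sum_Icc_sub hle]; ring
    _ ≤ g τ := by linarith

section TailProduct

variable (b : ℕ → ℝ) (σ : ℝ) (t : ℕ)

theorem mul_mul_prod_Icc_succ_eq_sub {k : ℕ} (hk : k ≤ t) :
    σ * (b k * ∏ j ∈ Icc (k + 1) t, (1 - b j * σ)) =
      ∏ j ∈ Icc (k + 1) t, (1 - b j * σ) - ∏ j ∈ Icc k t, (1 - b j * σ) := by
  rw [← mul_prod_Ioc_eq_prod_Icc hk, Icc_add_one_left_eq_Ioc]
  ring

theorem mul_sum_mul_prod_Icc_succ_eq_sub {τ l : ℕ} (hτl : τ ≤ l + 1) (hlt : l ≤ t) :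
    σ * ∑ k ∈ Icc τ l, b k * ∏ j ∈ Icc (k + 1) t, (1 - b j * σ) =
      ∏ j ∈ Icc (l + 1) t, (1 - b j * σ) - ∏ j ∈ Icc τ t, (1 - b j * σ) := by
  rw [mul_sum, ← Ico_add_one_right_eq_Icc,
    sum_congr rfl fun k hk => mul_mul_prod_Icc_succ_eq_sub b σ t (by simp at hk; omega)]
  exact sum_Ico_sub (fun k => ∏ j ∈ Icc k t, (1 - b j * σ)) hτl

theorem mul_tail_weighted_sum_le (hσ1 : σ ≤ 1) (hb : ∀ l ≤ t, b l * σ ∈ Set.Icc 0 1)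
    (μ : ℕ → ℝ) (hμ : ∀ l, 0 ≤ μ l) (τ : ℕ) :
    σ * ((∏ j ∈ Icc τ t, (1 - b j * σ)) * ∑ l ∈ Icc τ t, μ l +
        ∑ k ∈ Icc τ t, b k * (∏ j ∈ Icc (k + 1) t, (1 - b j * σ)) * ∑ l ∈ Icc k t, μ l) ≤
      ∑ l ∈ Icc τ t, μ l := by
  set P : ℕ → ℝ := fun k => ∏ j ∈ Icc k t, (1 - b j * σ)
  have hfactor {k j : ℕ} (hj : j ∈ Icc k t) : 0 ≤ 1 - b j * σ ∧ 1 - b j * σ ≤ 1 := by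
    have := hb j (mem_Icc.1 hj).2
    exact ⟨by linarith [this.2], by linarith [this.1]⟩
  have hP0 : 0 ≤ P τ := prod_nonneg fun _ hj => (hfactor hj).1
  have hP1 (k : ℕ) : P k ≤ 1 := prod_le_one (fun _ hj => (hfactor hj).1) fun _ hj => (hfactor hj).2
  have hswap : ∑ k ∈ Icc τ t, b k * P (k + 1) * ∑ l ∈ Icc k t, μ l =
      ∑ l ∈ Icc τ t, (∑ k ∈ Icc τ l, b k * P (k + 1)) * μ l := by
    simp_rw [mul_sum, sum_mul]
    exact sum_comm' fun k l => by simp only [mem_Icc]; omega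
  calc σ * (P τ * ∑ l ∈ Icc τ t, μ l + ∑ k ∈ Icc τ t, b k * P (k + 1) * ∑ l ∈ Icc k t, μ l)
      = ∑ l ∈ Icc τ t, (σ * P τ + σ * ∑ k ∈ Icc τ l, b k * P (k + 1)) * μ l := by
        rw [hswap, mul_sum, ← sum_add_distrib, mul_sum]
        exact sum_congr rfl fun l _ => by ring
    _ = ∑ l ∈ Icc τ t, (P (l + 1) - (1 - σ) * P τ) * μ l := by
        refine sum_congr rfl fun l hl => ?_
        rw [mul_sum_mul_prod_Icc_succ_eq_sub b σ t (by simp at hl; omega) (mem_Icc.1 hl).2]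
        ring
    _ ≤ ∑ l ∈ Icc τ t, μ l := by
        refine sum_le_sum fun l _ => mul_le_of_le_one_left (hμ l) ?_
        nlinarith [hP1 (l + 1)]

end TailProduct

theorem betaTilde_muStep_tail_le_general (cβ σ ν : ℝ) (hcβ : 0 < cβ) (hσ : 0 < σ) (hσ1 : σ ≤ 1)
    (t : ℕ)
    (hsmall : ∀ l : ℕ, l ≤ t → betaStep cβ ν l * σ ≤ 1)
    (cμ ζ : ℝ) (hcμ : 0 < cμ) (hζ : 1 < ζ)
    (τ : ℕ) (hτ : 1 ≤ τ) :
    betaTildeKT cβ σ ν (τ - 1) t * (∑ l ∈ Finset.Icc τ t, muStep cμ ζ l)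
        + ∑ k ∈ Finset.Icc τ t, betaKT cβ σ ν k t * ∑ l ∈ Finset.Icc k t, muStep cμ ζ l
      ≤ cμ / (σ * (ζ - 1) * (τ : ℝ) ^ (ζ - 1)) := by
  have hβσ (l : ℕ) (hl : l ≤ t) : betaStep cβ ν l * σ ∈ Set.Icc 0 1 :=
    ⟨by unfold betaStep; positivity, hsmall l hl⟩
  have hweighted := mul_tail_weighted_sum_le (betaStep cβ ν) σ t hσ1 hβσ (muStep cμ ζ)
    (fun l => by unfold muStep; positivity) τ
  have htail : ∑ l ∈ Icc τ t, muStep cμ ζ l ≤ cμ * (1 / ((ζ - 1) * (τ : ℝ) ^ (ζ - 1))) := by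
    simp only [muStep, div_eq_mul_one_div cμ, ← mul_sum]
    exact mul_le_mul_of_nonneg_left (sum_Icc_one_div_add_one_rpow_le hζ hτ t) hcμ.le
  rw [betaTildeKT, Nat.sub_add_cancel hτ, mul_assoc σ, mul_comm σ, ← div_div, le_div_iff₀ hσ,
    mul_comm]
  exact hweighted.trans (htail.trans_eq (mul_one_div _ _))

/-- for `c_μ > 0`, `ζ > 1`, and `1 ≤ τ ≤ t`,
`β̃_{τ−1,t} (Σ_{l=τ}^{t} c_{μ,l}) + Σ_{k=τ}^{t} β_{k,t} (Σ_{l=k}^{t} c_{μ,l})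
  ≤ c_μ / (σ (ζ−1) τ^{ζ−1})`. -/
theorem betaTilde_muStep_tail_le (cβ σ ν : ℝ) (hcβ : 0 < cβ) (hσ : 0 < σ) (hσ1 : σ ≤ 1)
    (hν : 0 < ν) (hν1 : ν ≤ 1) (t : ℕ)
    (hsmall : ∀ l : ℕ, l ≤ t → betaStep cβ ν l * σ ≤ 1)
    (cμ ζ : ℝ) (hcμ : 0 < cμ) (hζ : 1 < ζ)
    (τ : ℕ) (hτ : 1 ≤ τ) (hτt : τ ≤ t) :
    betaTildeKT cβ σ ν (τ - 1) t * (∑ l ∈ Finset.Icc τ t, muStep cμ ζ l)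
        + ∑ k ∈ Finset.Icc τ t, betaKT cβ σ ν k t * ∑ l ∈ Finset.Icc k t, muStep cμ ζ l
      ≤ cμ / (σ * (ζ - 1) * (τ : ℝ) ^ (ζ - 1)) :=
  betaTilde_muStep_tail_le_general cβ σ ν hcβ hσ hσ1 t hsmall cμ ζ hcμ hζ τ hτ
end

section
/- Let ρ ∈ (0,1), σ ∈ (0,1], ν ∈ (0,1], and w ∈ (0,1] be reals, let c_β ≥ 1/((1−√ρ)σ), and let τ ≥ 1 be an integer with (1 + 1/(τ+1))^w ≤ 1/√ρ. Let (d_t)_{t≥τ} be reals with σ ≤ d_t ≤ 1 and β_t d_t ≤ 1 for all t ≥ τ, where β_t := c_β/(t+1)^ν. Then for every integer t ≥ τ: (a) Σ_{k=τ}^{t} β_k d_k (∏_{l=k+1}^{t}(1 − β_l d_l)) (k+1)^{−w} ≤ 1/(√ρ (t+2)^w); and (b) for every real ζ > 1, Σ_{k=τ}^{t} β_k d_k (∏_{l=k+1}^{t}(1 − β_l d_l)) τ^{1−ζ} ≤ τ^{1−ζ}/√ρ. -/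
/-!
Write `a k = β_k d_k` and `S_t = ∑_{k=τ}^{t} a_k ∏_{l=k+1}^{t} (1 - a_l) x_k`. Then
`S_τ = a_τ x_τ` and `S_{t+1} = (1 - a_{t+1}) S_t + a_{t+1} x_{t+1}`, so a bound `S_t ≤ u_t` propagates
by induction as soon as `u` absorbs one step of this recursion. For constant `x = u = c` the step is an
identity. For `x_k = (k+1)^{-w}` and `u_t = 1/(√ρ (t+2)^w)` the step holds because the choice of `c_β`
forces `a_{t+1} ≥ 1/((1-√ρ)(t+2))`, which leaves room `(t+1)/(t+2) ≤ ((t+2)/(t+3))^w`; the base case is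
the assumption on `τ`.
-/

open Finset Real

noncomputable def discountedSum (a x : ℕ → ℝ) (τ t : ℕ) : ℝ :=
  ∑ k ∈ Icc τ t, a k * (∏ l ∈ Icc (k + 1) t, (1 - a l)) * x k

section DiscountedSum

variable {a x u : ℕ → ℝ} {τ : ℕ}

theorem discountedSum_self : discountedSum a x τ τ = a τ * x τ := by
  simp [discountedSum]

theorem discountedSum_succ {t : ℕ} (ht : τ ≤ t) :
    discountedSum a x τ (t + 1) = (1 - a (t + 1)) * discountedSum a x τ t + a (t + 1) * x (t + 1) := by
  have hlast : Icc (t + 1 + 1) (t + 1) = ∅ := Icc_eq_empty (by omega)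
  rw [discountedSum, sum_Icc_succ_top (by omega), hlast, prod_empty, discountedSum, mul_sum]
  congr 1
  · refine sum_congr rfl fun k hk => ?_
    rw [prod_Icc_succ_top (by have := (mem_Icc.mp hk).2; omega)]
    ring
  · ring

theorem discountedSum_le_of_step (ha : ∀ t, τ < t → a t ≤ 1) (hbase : a τ * x τ ≤ u τ)
    (hstep : ∀ t, τ ≤ t → (1 - a (t + 1)) * u t + a (t + 1) * x (t + 1) ≤ u (t + 1)) :
    ∀ t, τ ≤ t → discountedSum a x τ t ≤ u t := by
  intro t ht
  induction t, ht using Nat.le_induction with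
  | base => rwa [discountedSum_self]
  | succ t ht ih =>
    have hA : 0 ≤ 1 - a (t + 1) := sub_nonneg.mpr (ha (t + 1) (by omega))
    rw [discountedSum_succ ht]
    nlinarith [hstep t ht]

theorem discountedSum_const_le {c : ℝ} (hc : 0 ≤ c) (ha : ∀ t, τ ≤ t → a t ≤ 1) :
    ∀ t, τ ≤ t → discountedSum a (fun _ => c) τ t ≤ c :=
  discountedSum_le_of_step (u := fun _ => c) (fun t ht => ha t ht.le)
    (mul_le_of_le_one_left hc (ha τ le_rfl)) fun t _ => by linarith

end DiscountedSum

theorem one_div_mul_le_div_rpow_mul {m σ c d ν y : ℝ} (hm : 0 < m) (hσ : 0 < σ)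
    (hc : 1 / (m * σ) ≤ c) (hd : σ ≤ d) (hν1 : ν ≤ 1) (hy : 1 ≤ y) :
    1 / (m * y) ≤ c / y ^ ν * d := by
  have hyν : 0 < y ^ ν := by positivity
  have hc0 : 0 ≤ c := le_trans (by positivity) hc
  calc 1 / (m * y) ≤ 1 / (m * y ^ ν) := by
        gcongr
        simpa using Real.rpow_le_rpow_of_exponent_le hy hν1
    _ = 1 / (m * σ) * σ / y ^ ν := by field_simp
    _ ≤ c * d / y ^ ν := by gcongr
    _ = c / y ^ ν * d := by ring

theorem one_sub_one_div_mul_rpow_add_one_le {y w : ℝ} (hy : 1 ≤ y) (hw1 : w ≤ 1) :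
    (1 - 1 / y) * (y + 1) ^ w ≤ y ^ w := by
  have hy0 : 0 < y := by linarith
  have hratio : (y + 1) ^ w ≤ (y + 1) / y * y ^ w := by
    calc (y + 1) ^ w = ((y + 1) / y) ^ w * y ^ w := by
          rw [← Real.mul_rpow (by positivity) hy0.le, div_mul_cancel₀ _ hy0.ne']
      _ ≤ (y + 1) / y * y ^ w := by
          gcongr
          exact Real.rpow_le_self_of_one_le ((one_le_div hy0).mpr (by linarith)) hw1
  have hfactor : (1 - 1 / y) * ((y + 1) / y) ≤ 1 := by
    rw [one_sub_div hy0.ne', div_mul_div_comm, div_le_one (by positivity)]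
    nlinarith
  have hpow : 0 ≤ y ^ w := by positivity
  calc (1 - 1 / y) * (y + 1) ^ w ≤ (1 - 1 / y) * ((y + 1) / y * y ^ w) := by
        gcongr
        exact sub_nonneg.mpr ((div_le_one hy0).mpr hy)
    _ = ((1 - 1 / y) * ((y + 1) / y)) * y ^ w := by ring
    _ ≤ y ^ w := mul_le_of_le_one_left hpow hfactor

theorem one_div_rpow_le_of_one_add_one_div_rpow_le {y s w : ℝ} (hy : 0 < y) (hs : 0 < s)
    (h : (1 + 1 / y) ^ w ≤ 1 / s) : 1 / y ^ w ≤ 1 / (s * (y + 1) ^ w) := by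
  have hsplit : (y + 1) ^ w = (1 + 1 / y) ^ w * y ^ w := by
    rw [← Real.mul_rpow (by positivity) hy.le]
    congr 1
    field_simp
  have hkey : s * (y + 1) ^ w ≤ y ^ w := by
    rw [hsplit, ← mul_assoc]
    calc s * (1 + 1 / y) ^ w * y ^ w ≤ s * (1 / s) * y ^ w := by gcongr
      _ = y ^ w := by field_simp
  exact one_div_le_one_div_of_le (by positivity) hkey

theorem discount_step_le {s w y A : ℝ} (hs0 : 0 < s) (hs1 : s < 1) (hw1 : w ≤ 1) (hy : 1 ≤ y)
    (hA : 1 / ((1 - s) * y) ≤ A) :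
    (1 - A) * (1 / (s * y ^ w)) + A * (1 / y ^ w) ≤ 1 / (s * (y + 1) ^ w) := by
  have hy0 : 0 < y := by linarith
  have hsA : 1 / y ≤ (1 - s) * A := by
    calc 1 / y = (1 - s) * (1 / ((1 - s) * y)) := by field_simp [(sub_pos.mpr hs1).ne']
      _ ≤ (1 - s) * A := by gcongr
  have hrpow := one_sub_one_div_mul_rpow_add_one_le hy hw1
  calc (1 - A) * (1 / (s * y ^ w)) + A * (1 / y ^ w) = (1 - (1 - s) * A) / (s * y ^ w) := by
        field_simp
        ring
    _ ≤ (1 - 1 / y) / (s * y ^ w) := by gcongr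
    _ ≤ 1 / (s * (y + 1) ^ w) := by
        rw [div_le_div_iff₀ (by positivity) (by positivity)]
        nlinarith

theorem weighted_sum_bounds_general (ρ σ ν w cβ : ℝ)
    (hρ : 0 < ρ) (hρ1 : ρ < 1)
    (hσ : 0 < σ)
    (hν1 : ν ≤ 1)
    (hw1 : w ≤ 1)
    (hcβ : 1 / ((1 - Real.sqrt ρ) * σ) ≤ cβ)
    (τ : ℕ)
    (hτρ : (1 + 1 / ((τ : ℝ) + 1)) ^ w ≤ 1 / Real.sqrt ρ)
    (d : ℕ → ℝ)
    (hd : ∀ t : ℕ, τ ≤ t → σ ≤ d t ∧ d t ≤ 1)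
    (hβd : ∀ t : ℕ, τ ≤ t → (cβ / ((t : ℝ) + 1) ^ ν) * d t ≤ 1) :
    ∀ t : ℕ, τ ≤ t →
      (∑ k ∈ Finset.Icc τ t,
          (cβ / ((k : ℝ) + 1) ^ ν) * d k
            * (∏ l ∈ Finset.Icc (k + 1) t, (1 - (cβ / ((l : ℝ) + 1) ^ ν) * d l))
            * (1 / ((k : ℝ) + 1) ^ w)
        ≤ 1 / (Real.sqrt ρ * ((t : ℝ) + 2) ^ w))
      ∧ (∀ ζ : ℝ, 1 < ζ →
        ∑ k ∈ Finset.Icc τ t,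
            (cβ / ((k : ℝ) + 1) ^ ν) * d k
              * (∏ l ∈ Finset.Icc (k + 1) t, (1 - (cβ / ((l : ℝ) + 1) ^ ν) * d l))
              * (τ : ℝ) ^ (1 - ζ)
          ≤ (τ : ℝ) ^ (1 - ζ) / Real.sqrt ρ) := by
  have hs0 : 0 < √ρ := Real.sqrt_pos.mpr hρ
  have hs1 : √ρ < 1 := (Real.sqrt_lt' one_pos).mpr (by simpa using hρ1)
  intro t ht
  refine ⟨discountedSum_le_of_step (x := fun k => 1 / ((k : ℝ) + 1) ^ w)
    (u := fun t => 1 / (√ρ * ((t : ℝ) + 2) ^ w)) (fun t ht => hβd t ht.le) ?_ (fun t ht => ?_) t ht,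
    fun ζ _ => ?_⟩
  · calc cβ / ((τ : ℝ) + 1) ^ ν * d τ * (1 / ((τ : ℝ) + 1) ^ w) ≤ 1 / ((τ : ℝ) + 1) ^ w :=
          mul_le_of_le_one_left (by positivity) (hβd τ le_rfl)
      _ ≤ 1 / (√ρ * ((τ : ℝ) + 2) ^ w) := by
          simpa [add_assoc, one_add_one_eq_two] using
            one_div_rpow_le_of_one_add_one_div_rpow_le (by positivity) hs0 hτρ
  · have hx : ((t + 1 : ℕ) : ℝ) + 1 = t + 2 := by push_cast; ring
    have hu : ((t + 1 : ℕ) : ℝ) + 2 = t + 2 + 1 := by push_cast; ring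
    have hy : (1 : ℝ) ≤ t + 2 := by linarith [(t.cast_nonneg : (0 : ℝ) ≤ t)]
    have hA := one_div_mul_le_div_rpow_mul (sub_pos.mpr hs1) hσ hcβ (hd (t + 1) (by omega)).1 hν1 hy
    simp only [hx, hu]
    exact discount_step_le hs0 hs1 hw1 hy hA
  · have hc : 0 ≤ (τ : ℝ) ^ (1 - ζ) := by positivity
    exact (discountedSum_const_le hc hβd t ht).trans (le_div_self hc hs0 hs1.le)

/-- helper bounds for the weighted sums
`Σ_{k=τ}^{t} β_k d_k ∏_{l=k+1}^{t}(1 − β_l d_l) (k+1)^{−w}` and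
`Σ_{k=τ}^{t} β_k d_k ∏_{l=k+1}^{t}(1 − β_l d_l) τ^{1−ζ}`,
where `β_t = c_β/(t+1)^ν`. -/
theorem weighted_sum_bounds (ρ σ ν w cβ : ℝ)
    (hρ : 0 < ρ) (hρ1 : ρ < 1)
    (hσ : 0 < σ) (hσ1 : σ ≤ 1)
    (hν : 0 < ν) (hν1 : ν ≤ 1)
    (hw : 0 < w) (hw1 : w ≤ 1)
    (hcβ : 1 / ((1 - Real.sqrt ρ) * σ) ≤ cβ)
    (τ : ℕ) (hτ : 1 ≤ τ)
    (hτρ : (1 + 1 / ((τ : ℝ) + 1)) ^ w ≤ 1 / Real.sqrt ρ)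
    (d : ℕ → ℝ)
    (hd : ∀ t : ℕ, τ ≤ t → σ ≤ d t ∧ d t ≤ 1)
    (hβd : ∀ t : ℕ, τ ≤ t → (cβ / ((t : ℝ) + 1) ^ ν) * d t ≤ 1) :
    ∀ t : ℕ, τ ≤ t →
      (∑ k ∈ Finset.Icc τ t,
          (cβ / ((k : ℝ) + 1) ^ ν) * d k
            * (∏ l ∈ Finset.Icc (k + 1) t, (1 - (cβ / ((l : ℝ) + 1) ^ ν) * d l))
            * (1 / ((k : ℝ) + 1) ^ w)
        ≤ 1 / (Real.sqrt ρ * ((t : ℝ) + 2) ^ w))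
      ∧ (∀ ζ : ℝ, 1 < ζ →
        ∑ k ∈ Finset.Icc τ t,
            (cβ / ((k : ℝ) + 1) ^ ν) * d k
              * (∏ l ∈ Finset.Icc (k + 1) t, (1 - (cβ / ((l : ℝ) + 1) ^ ν) * d l))
              * (τ : ℝ) ^ (1 - ζ)
          ≤ (τ : ℝ) ^ (1 - ζ) / Real.sqrt ρ) :=
  weighted_sum_bounds_general ρ σ ν w cβ hρ hρ1 hσ hν1 hw1 hcβ τ hτρ d hd hβd
end

section
/- Let K ≥ 2 be an integer, let (e_k)_{1≤k≤K} be reals with 0 ≤ e_k ≤ 2, let (c_k)_{1≤k≤K} be positive and nonincreasing, and let (δ_k)_{1≤k≤K−1} be reals such that e_k ≤ (e_k − e_{k+1})/c_{k+1} + δ_k for all 1 ≤ k ≤ K−1. Then (1/K) Σ_{k=1}^{K−1} e_k ≤ 2/(K c_K) + (1/K) Σ_{k=1}^{K−1} δ_k. -/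
open Finset

/-- Abel summation with the potential `(M - e n) / c n`: as `M - e n ≥ 0`, replacing `c n` by the
smaller `c (n + 1)` can only increase it, and adding the next summand then turns it into
`(M - e (n + 1)) / c (n + 1)`. -/
lemma sum_Icc_sub_div_le {e c : ℕ → ℝ} (M : ℝ) (n : ℕ)
    (he : ∀ k ∈ Icc 1 (n + 1), e k ≤ M)
    (hc : ∀ k ∈ Icc 1 (n + 1), 0 < c k)
    (hanti : ∀ k ∈ Icc 1 n, c (k + 1) ≤ c k) :
    ∑ k ∈ Icc 1 n, (e k - e (k + 1)) / c (k + 1) ≤ (M - e (n + 1)) / c (n + 1) := by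
  induction n with
  | zero =>
    simp only [zero_add, Icc_self, Icc_eq_empty_of_lt zero_lt_one, sum_empty] at he hc ⊢
    exact div_nonneg (sub_nonneg.2 (he 1 (mem_singleton_self 1)))
      (hc 1 (mem_singleton_self 1)).le
  | succ n ih =>
    have hsub : Icc 1 (n + 1) ⊆ Icc 1 (n + 1 + 1) := Icc_subset_Icc_right (by omega)
    have ih := ih (fun k hk => he k (hsub hk)) (fun k hk => hc k (hsub hk))
      (fun k hk => hanti k (Icc_subset_Icc_right (by omega) hk))
    have hnext : (M - e (n + 1)) / c (n + 1) ≤ (M - e (n + 1)) / c (n + 2) :=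
      div_le_div_of_nonneg_left (sub_nonneg.2 (he (n + 1) (by simp)))
        (hc (n + 2) (by simp)) (hanti (n + 1) (by simp))
    rw [sum_Icc_succ_top (by omega)]
    calc _ ≤ (M - e (n + 1)) / c (n + 2) + (e (n + 1) - e (n + 2)) / c (n + 2) := by
          gcongr; exact ih.trans hnext
      _ = (M - e (n + 2)) / c (n + 2) := by ring

theorem abel_averaging_bound_general (K : ℕ)
    (e c δ : ℕ → ℝ)
    (he : ∀ k : ℕ, 1 ≤ k → k ≤ K → 0 ≤ e k ∧ e k ≤ 2)
    (hcpos : ∀ k : ℕ, 1 ≤ k → k ≤ K → 0 < c k)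
    (hcmono : ∀ k : ℕ, 1 ≤ k → k + 1 ≤ K → c (k + 1) ≤ c k)
    (hrec : ∀ k : ℕ, 1 ≤ k → k ≤ K - 1 → e k ≤ (e k - e (k + 1)) / c (k + 1) + δ k) :
    (1 / (K : ℝ)) * ∑ k ∈ Finset.Icc 1 (K - 1), e k
      ≤ 2 / ((K : ℝ) * c K) + (1 / (K : ℝ)) * ∑ k ∈ Finset.Icc 1 (K - 1), δ k := by
  rcases K with _ | n
  · simp
  simp only [Nat.add_sub_cancel] at hrec ⊢
  have habel : ∑ k ∈ Icc 1 n, (e k - e (k + 1)) / c (k + 1) ≤ 2 / c (n + 1) := by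
    refine (sum_Icc_sub_div_le 2 n (fun k hk => (he k (mem_Icc.1 hk).1 (mem_Icc.1 hk).2).2)
      (fun k hk => hcpos k (mem_Icc.1 hk).1 (mem_Icc.1 hk).2)
      (fun k hk => hcmono k (mem_Icc.1 hk).1 (Nat.succ_le_succ (mem_Icc.1 hk).2))).trans ?_
    exact div_le_div_of_nonneg_right (by linarith [(he (n + 1) (by omega) le_rfl).1])
      (hcpos (n + 1) (by omega) le_rfl).le
  have hsum : ∑ k ∈ Icc 1 n, e k ≤ 2 / c (n + 1) + ∑ k ∈ Icc 1 n, δ k :=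
    calc ∑ k ∈ Icc 1 n, e k
        ≤ ∑ k ∈ Icc 1 n, ((e k - e (k + 1)) / c (k + 1) + δ k) :=
          sum_le_sum fun k hk => hrec k (mem_Icc.1 hk).1 (mem_Icc.1 hk).2
      _ ≤ _ := by rw [sum_add_distrib]; gcongr
  calc _ ≤ 1 / ((n + 1 : ℕ) : ℝ) * (2 / c (n + 1) + ∑ k ∈ Icc 1 n, δ k) := by gcongr
    _ = _ := by ring

/-- Abel-summation averaging bound. If `0 ≤ e_k ≤ 2`, the `c_k` are
positive and nonincreasing, and `e_k ≤ (e_k − e_{k+1})/c_{k+1} + δ_k` for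
`1 ≤ k ≤ K−1`, then `(1/K) Σ_{k=1}^{K−1} e_k ≤ 2/(K c_K) + (1/K) Σ_{k=1}^{K−1} δ_k`. -/
theorem abel_averaging_bound (K : ℕ) (hK : 2 ≤ K)
    (e c δ : ℕ → ℝ)
    (he : ∀ k : ℕ, 1 ≤ k → k ≤ K → 0 ≤ e k ∧ e k ≤ 2)
    (hcpos : ∀ k : ℕ, 1 ≤ k → k ≤ K → 0 < c k)
    (hcmono : ∀ k : ℕ, 1 ≤ k → k + 1 ≤ K → c (k + 1) ≤ c k)
    (hrec : ∀ k : ℕ, 1 ≤ k → k ≤ K - 1 → e k ≤ (e k - e (k + 1)) / c (k + 1) + δ k) :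
    (1 / (K : ℝ)) * ∑ k ∈ Finset.Icc 1 (K - 1), e k
      ≤ 2 / ((K : ℝ) * c K) + (1 / (K : ℝ)) * ∑ k ∈ Finset.Icc 1 (K - 1), δ k :=
  abel_averaging_bound_general K e c δ he hcpos hcmono hrec
end
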